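/- Let m be a nonzero integer and set b = diag(ε^m, ε^{−m}) ∈ SL_2(L). Let t ∈ o_L^× and τ = diag(t, t⁻¹) ∈ SL_2(L). Then for every g ∈ SL_2(L) and every ε-monomial matrix x ∈ SL_2(L): g⁻¹·b·σ(g) ∈ I·x·I if and only if (τ·g)⁻¹·b·σ(τ·g) ∈ I·x·I. In particular, the affine Deligne–Lusztig set {g·I : g⁻¹·b·σ(g) ∈ I·x·I} ⊆ SL_2(L)/I is preserved by left multiplication by every diagonal matrix diag(t, t⁻¹) with t ∈ o_L^×. -/

import Mathlib

noncomputable section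

open Matrix

/-- The ε-adic valuation on `L = k̄((ε))`, with `val 0 = ∞`. -/
def val {K : Type*} [Field K] (x : LaurentSeries K) : WithTop ℤ := x.orderTop

/-- The uniformizer ε of the Laurent series field. -/
def eps (K : Type*) [Field K] : LaurentSeries K := HahnSeries.single 1 1

/-- `σ : L → L` is the Frobenius automorphism: it fixes ε and raises each Laurent-series
coefficient to the `q`-th power.  (This property determines `σ` uniquely.) -/
def IsFrobenius (K : Type*) [Field K] (q : ℕ)
    (σ : LaurentSeries K → LaurentSeries K) : Prop :=
  ∀ (x : LaurentSeries K) (n : ℤ), (σ x).coeff n = (x.coeff n) ^ q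

/-- A square matrix over `L` is of Iwahori form: diagonal entries in `o_L^×`, entries
above the diagonal in `o_L`, entries below the diagonal in `ε·o_L`. -/
def IwahoriForm {K : Type*} [Field K] {n : ℕ}
    (M : Matrix (Fin n) (Fin n) (LaurentSeries K)) : Prop :=
  (∀ i, val (M i i) = 0) ∧
  (∀ i j : Fin n, i < j → 0 ≤ val (M i j)) ∧
  (∀ i j : Fin n, j < i → 1 ≤ val (M i j))

/-- `x` is an ε-monomial matrix. -/
def EpsMonomial {K : Type*} [Field K] {n : ℕ}
    (x : Matrix (Fin n) (Fin n) (LaurentSeries K)) : Prop :=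
  (∀ i, ∃! j, x i j ≠ 0) ∧ (∀ j, ∃! i, x i j ≠ 0) ∧
  (∀ i j, x i j ≠ 0 → ∃ m : ℤ, x i j = eps K ^ m)

/-- `M` lies in the double coset `I·x·I`, where `I` is the Iwahori subgroup of `SL_n(L)`
(matrices of Iwahori form with determinant 1). -/
def InIxISL {K : Type*} [Field K] {n : ℕ}
    (x M : Matrix (Fin n) (Fin n) (LaurentSeries K)) : Prop :=
  ∃ N₁ N₂, IwahoriForm N₁ ∧ N₁.det = 1 ∧ IwahoriForm N₂ ∧ N₂.det = 1 ∧ M = N₁ * x * N₂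

/-!
The condition `g⁻¹ b σ(g) ∈ I x I` depends only on the coset `g I`: replacing `g` by `g j`
with `j ∈ I` replaces `g⁻¹ b σ(g)` by `j⁻¹ (g⁻¹ b σ(g)) σ(j)`, and `σ(I) = I`. By the Iwasawa
decomposition, `g I = U I` or `g I = U w I` with `U = !![ε^r, y; 0, ε^(-r)]` and `w` the Weyl
element; moreover `τ U = U' τ` and `τ w = w τ⁻¹`, where `U'` is `U` with `y` replaced by `t² y`,
and `τ ∈ I`. Now `U⁻¹ b σ(U) = !![ε^m, E(y); 0, ε^(-m)]` with
`E(y) = ε^(m-r) σ(y) - ε^(-m-r) y`; as `m ≠ 0` the two terms have different valuations, so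
`val E(y)` depends only on `val y = val (t² y)`. Finally the double coset
`I !![ε^a, E; 0, ε^(-a)] I` depends only on `val E`: unipotent elements of `I` change `E` by
anything of valuation `≥ min(a, -a)`, and below that bound the matrix is `I`-equivalent to an
antidiagonal one. The case `U w` reduces to the triangular one through conjugation by
`Π = !![0, 1; ε, 0]`, which normalizes `I`.
-/

section

variable {K : Type*} [Field K]

local notation "ε" => eps K

local notation "Mat" => Matrix (Fin 2) (Fin 2) (LaurentSeries K)

theorem val_eq_addVal (x : LaurentSeries K) : val x = HahnSeries.addVal ℤ K x :=
  HahnSeries.addVal_apply.symm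

@[simp] theorem val_eq_top_iff {x : LaurentSeries K} : val x = ⊤ ↔ x = 0 :=
  HahnSeries.orderTop_eq_top

@[simp] theorem val_zero : val (0 : LaurentSeries K) = ⊤ := HahnSeries.orderTop_zero

@[simp] theorem val_one : val (1 : LaurentSeries K) = 0 := HahnSeries.orderTop_one

theorem val_mul (x y : LaurentSeries K) : val (x * y) = val x + val y := by
  simp only [val_eq_addVal, AddValuation.map_mul]

@[simp] theorem val_neg (x : LaurentSeries K) : val (-x) = val x := by
  simp only [val_eq_addVal, AddValuation.map_neg]

theorem val_inv (x : LaurentSeries K) : val x⁻¹ = -val x := by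
  simp only [val_eq_addVal, AddValuation.map_inv]

theorem val_inv_of_val_eq {x : LaurentSeries K} {v : ℤ} (h : val x = v) :
    val x⁻¹ = ((-v : ℤ) : WithTop ℤ) := by
  rw [val_inv, h]
  rfl

theorem val_add_of_lt {x y : LaurentSeries K} (h : val x < val y) : val (x + y) = val x := by
  simp only [val_eq_addVal] at *
  exact AddValuation.map_add_eq_of_lt_left _ h

theorem val_sub_of_ne {x y : LaurentSeries K} (h : val x ≠ val y) :
    val (x - y) = min (val x) (val y) := by
  simp only [val_eq_addVal] at *
  rw [sub_eq_add_neg, AddValuation.map_add_of_distinct_val _ (by rwa [AddValuation.map_neg]),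
    AddValuation.map_neg]

theorem le_val_add {c : WithTop ℤ} {x y : LaurentSeries K} (hx : c ≤ val x) (hy : c ≤ val y) :
    c ≤ val (x + y) := by
  rw [val_eq_addVal] at *
  exact AddValuation.map_le_add _ hx hy

theorem le_val_sub {c : WithTop ℤ} {x y : LaurentSeries K} (hx : c ≤ val x) (hy : c ≤ val y) :
    c ≤ val (x - y) := by
  rw [val_eq_addVal] at *
  exact AddValuation.map_le_sub _ hx hy

theorem val_eq_of_support_eq {x y : LaurentSeries K} (h : x.support = y.support) :
    val x = val y := by
  by_cases hx : x = 0
  · rw [hx, HahnSeries.support_zero, eq_comm, HahnSeries.support_eq_empty_iff] at h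
    rw [hx, h]
  · have hy : y ≠ 0 := fun hy ↦
      hx (HahnSeries.support_eq_empty_iff.mp (by rw [h, hy, HahnSeries.support_zero]))
    simp only [val, HahnSeries.orderTop_of_ne_zero hx, HahnSeries.orderTop_of_ne_zero hy, h]

@[simp] theorem eps_ne_zero : ε ≠ 0 := HahnSeries.single_ne_zero one_ne_zero

@[simp] theorem val_eps_zpow (k : ℤ) : val (ε ^ k) = k := by
  rw [eps, ← RatFunc.single_zpow]
  exact HahnSeries.orderTop_single one_ne_zero

@[simp] theorem val_eps : val ε = 1 := by simpa using val_eps_zpow (K := K) 1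

theorem val_eps_zpow_mul (k : ℤ) (x : LaurentSeries K) : val (ε ^ k * x) = k + val x := by
  rw [val_mul, val_eps_zpow]

theorem le_val_eps_zpow_mul_iff {x : LaurentSeries K} {k n : ℤ} :
    (n : WithTop ℤ) ≤ val (ε ^ k * x) ↔ ((n - k : ℤ) : WithTop ℤ) ≤ val x := by
  rw [val_eps_zpow_mul]
  induction val x using WithTop.recTopCoe with
  | top => simp
  | coe a => norm_cast; omega

theorem val_eps_zpow_neg_mul {x : LaurentSeries K} {v : ℤ} (h : val x = v) :
    val (ε ^ (-v) * x) = 0 := by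
  rw [val_eps_zpow_mul, h, ← WithTop.coe_add, neg_add_cancel, WithTop.coe_zero]

theorem val_eps_zpow_mul_inv {x : LaurentSeries K} {v : ℤ} (h : val x = v) :
    val (ε ^ v * x⁻¹) = 0 := by
  rw [← neg_neg v, _root_.zpow_neg, ← mul_inv, val_inv, val_eps_zpow_neg_mul h, neg_zero]

theorem WithTop.coe_add_one_le_of_lt {v : ℤ} {x : WithTop ℤ} (h : (v : WithTop ℤ) < x) :
    ((v + 1 : ℤ) : WithTop ℤ) ≤ x := by
  induction x using WithTop.recTopCoe with
  | top => exact le_top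
  | coe a => exact WithTop.coe_le_coe.2 (WithTop.coe_lt_coe.1 h)

theorem fin_two_congr {α : Type*} {a b c d a' b' c' d' : α} (h₀₀ : a = a') (h₀₁ : b = b')
    (h₁₀ : c = c') (h₁₁ : d = d') : !![a, b; c, d] = !![a', b'; c', d'] := by
  rw [h₀₀, h₀₁, h₁₀, h₁₁]

theorem map_fin_two_of {α β : Type*} (f : α → β) (a b c d : α) :
    (!![a, b; c, d]).map f = !![f a, f b; f c, f d] := by
  ext i j
  fin_cases i <;> fin_cases j <;> rfl

structure MemIwahori {n : ℕ} (P : Matrix (Fin n) (Fin n) (LaurentSeries K)) : Prop where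
  iwahoriForm : IwahoriForm P
  det_eq_one : P.det = 1

theorem iwahoriForm_of_fin_two_iff {a b c d : LaurentSeries K} :
    IwahoriForm !![a, b; c, d] ↔ val a = 0 ∧ 0 ≤ val b ∧ 1 ≤ val c ∧ val d = 0 := by
  refine ⟨fun ⟨hd, hu, hl⟩ ↦
    ⟨hd 0, hu 0 1 Fin.zero_lt_one, hl 1 0 Fin.zero_lt_one, hd 1⟩, ?_⟩
  rintro ⟨ha, hb, hc, hd⟩
  refine ⟨fun i ↦ ?_, fun i j hij ↦ ?_, fun i j hij ↦ ?_⟩ <;>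
    fin_cases i <;> (try fin_cases j) <;> simp_all

theorem IwahoriForm.mul {A B : Mat} (hA : IwahoriForm A) (hB : IwahoriForm B) :
    IwahoriForm (A * B) := by
  rw [A.eta_fin_two, B.eta_fin_two, mul_fin_two, iwahoriForm_of_fin_two_iff] at *
  obtain ⟨ha, hb, hc, hd⟩ := hA
  obtain ⟨ha', hb', hc', hd'⟩ := hB
  have h00 : val (A 0 0 * B 0 0) = 0 := by rw [val_mul, ha, ha', add_zero]
  have h11 : val (A 1 1 * B 1 1) = 0 := by rw [val_mul, hd, hd', add_zero]
  have h01 : 1 ≤ val (A 0 1 * B 1 0) := by rw [val_mul]; exact le_add_of_nonneg_of_le hb hc'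
  have h10 : 1 ≤ val (A 1 0 * B 0 1) := by rw [val_mul]; exact le_add_of_le_of_nonneg hc hb'
  refine ⟨?_, ?_, ?_, ?_⟩
  · rw [val_add_of_lt (by rw [h00]; exact zero_lt_one.trans_le h01), h00]
  · refine le_val_add ?_ ?_ <;> rw [val_mul]
    · exact add_nonneg ha.ge hb'
    · exact add_nonneg hb hd'.ge
  · refine le_val_add ?_ ?_ <;> rw [val_mul]
    · exact le_add_of_le_of_nonneg hc ha'.ge
    · exact le_add_of_nonneg_of_le hd.ge hc'
  · rw [add_comm, val_add_of_lt (by rw [h11]; exact zero_lt_one.trans_le h10), h11]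

theorem IwahoriForm.adjugate {A : Mat} (hA : IwahoriForm A) : IwahoriForm A.adjugate := by
  rw [A.eta_fin_two, adjugate_fin_two_of, iwahoriForm_of_fin_two_iff] at *
  simp only [val_neg]
  tauto

theorem MemIwahori.one : MemIwahori (1 : Mat) := by
  refine ⟨?_, det_one⟩
  rw [one_fin_two, iwahoriForm_of_fin_two_iff]
  simp

theorem MemIwahori.mul {A B : Mat} (hA : MemIwahori A) (hB : MemIwahori B) :
    MemIwahori (A * B) :=
  ⟨hA.iwahoriForm.mul hB.iwahoriForm, by rw [det_mul, hA.det_eq_one, hB.det_eq_one, one_mul]⟩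

theorem MemIwahori.inv {A : Mat} (hA : MemIwahori A) : MemIwahori A⁻¹ := by
  rw [Matrix.inv_def, hA.det_eq_one, Ring.inverse_one, one_smul]
  exact ⟨hA.iwahoriForm.adjugate, by rw [det_adjugate, hA.det_eq_one, one_pow]⟩

theorem MemIwahori.map {A : Mat} (hA : MemIwahori A) {σ : LaurentSeries K →+* LaurentSeries K}
    (hσ : ∀ x, val (σ x) = val x) : MemIwahori (A.map σ) := by
  obtain ⟨⟨hd, hu, hl⟩, hdet⟩ := hA
  refine ⟨⟨?_, ?_, ?_⟩, ?_⟩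
  · simpa [hσ] using hd
  · simpa [hσ] using hu
  · simpa [hσ] using hl
  · rw [← RingHom.mapMatrix_apply, ← RingHom.map_det, hdet, map_one]

theorem memIwahori_diagonal {t : LaurentSeries K} (ht : val t = 0) :
    MemIwahori !![t, 0; 0, t⁻¹] := by
  have ht0 : t ≠ 0 := by rintro rfl; simp at ht
  refine ⟨?_, by simp [det_fin_two_of, ht0]⟩
  rw [iwahoriForm_of_fin_two_iff]
  simp [val_inv, ht]

theorem memIwahori_upper_unipotent {p : LaurentSeries K} (hp : 0 ≤ val p) :
    MemIwahori !![1, p; 0, 1] :=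
  ⟨iwahoriForm_of_fin_two_iff.2 ⟨val_one, hp, by simp, val_one⟩, by simp [det_fin_two_of]⟩

theorem memIwahori_lower_unipotent {p : LaurentSeries K} (hp : 1 ≤ val p) :
    MemIwahori !![1, 0; p, 1] :=
  ⟨iwahoriForm_of_fin_two_iff.2 ⟨val_one, by simp, hp, val_one⟩, by simp [det_fin_two_of]⟩

theorem inIxISL_iff {n : ℕ} {x M : Matrix (Fin n) (Fin n) (LaurentSeries K)} :
    InIxISL x M ↔ ∃ P Q, MemIwahori P ∧ MemIwahori Q ∧ M = P * x * Q := by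
  constructor
  · rintro ⟨P, Q, hP, hPdet, hQ, hQdet, h⟩
    exact ⟨P, Q, ⟨hP, hPdet⟩, ⟨hQ, hQdet⟩, h⟩
  · rintro ⟨P, Q, ⟨hP, hPdet⟩, ⟨hQ, hQdet⟩, h⟩
    exact ⟨P, Q, hP, hPdet, hQ, hQdet, h⟩

theorem inIxISL_mul_mul {n : ℕ} {P Q : Matrix (Fin n) (Fin n) (LaurentSeries K)}
    (hP : MemIwahori P) (hQ : MemIwahori Q) (M : Matrix (Fin n) (Fin n) (LaurentSeries K)) :
    InIxISL M (P * M * Q) :=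
  inIxISL_iff.2 ⟨P, Q, hP, hQ, rfl⟩

theorem InIxISL.trans {x M N : Mat} (h₁ : InIxISL x M) (h₂ : InIxISL M N) : InIxISL x N := by
  obtain ⟨P, Q, hP, hQ, rfl⟩ := inIxISL_iff.1 h₁
  obtain ⟨P', Q', hP', hQ', rfl⟩ := inIxISL_iff.1 h₂
  exact inIxISL_iff.2 ⟨P' * P, Q * Q', hP'.mul hP, hQ.mul hQ', by simp only [Matrix.mul_assoc]⟩

theorem InIxISL.symm {x M : Mat} (h : InIxISL x M) : InIxISL M x := by
  obtain ⟨P, Q, hP, hQ, rfl⟩ := inIxISL_iff.1 h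
  refine inIxISL_iff.2 ⟨P⁻¹, Q⁻¹, hP.inv, hQ.inv, ?_⟩
  have hPu : IsUnit P.det := by simp [hP.det_eq_one]
  have hQu : IsUnit Q.det := by simp [hQ.det_eq_one]
  calc x = P⁻¹ * P * x * (Q * Q⁻¹) := by
        rw [nonsing_inv_mul _ hPu, mul_nonsing_inv _ hQu, Matrix.one_mul, Matrix.mul_one]
    _ = P⁻¹ * (P * x * Q) * Q⁻¹ := by simp only [Matrix.mul_assoc]

theorem InIxISL.iff_of_right {x M N : Mat} (h : InIxISL M N) : InIxISL x M ↔ InIxISL x N :=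
  ⟨fun hM ↦ hM.trans h, fun hN ↦ hN.trans h.symm⟩

/-- Conjugation `A ↦ Π A Π⁻¹` by `Π = !![0, 1; ε, 0]`. -/
def conjPi (A : Mat) : Mat := !![A 1 1, ε⁻¹ * A 1 0; ε * A 0 1, A 0 0]

theorem conjPi_mul (A B : Mat) : conjPi (A * B) = conjPi A * conjPi B := by
  refine Matrix.ext fun i j ↦ ?_
  fin_cases i <;> fin_cases j <;> simp [conjPi, mul_apply] <;> field_simp <;> ring

theorem det_conjPi (A : Mat) : (conjPi A).det = A.det := by
  rw [conjPi, det_fin_two_of, det_fin_two]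
  field_simp

theorem MemIwahori.conjPi {A : Mat} (hA : MemIwahori A) : MemIwahori (conjPi A) := by
  refine ⟨?_, by rw [det_conjPi, hA.det_eq_one]⟩
  have h := hA.iwahoriForm
  rw [A.eta_fin_two, iwahoriForm_of_fin_two_iff] at h
  obtain ⟨ha, hb, hc, hd⟩ := h
  rw [_root_.conjPi, iwahoriForm_of_fin_two_iff, val_mul, val_mul, val_inv, val_eps]
  refine ⟨hd, ?_, ?_, ha⟩
  · simpa using add_le_add_right hc (-1)
  · exact le_add_of_nonneg_right hb

theorem InIxISL.conjPi {x M : Mat} (h : InIxISL x M) : InIxISL (conjPi x) (conjPi M) := by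
  obtain ⟨P, Q, hP, hQ, rfl⟩ := inIxISL_iff.1 h
  rw [conjPi_mul, conjPi_mul]
  exact inIxISL_mul_mul hP.conjPi hQ.conjPi _

theorem inIxISL_upper_add {a : ℤ} {E D : LaurentSeries K}
    (hD : (a : WithTop ℤ) ≤ val D ∨ ((-a : ℤ) : WithTop ℤ) ≤ val D) :
    InIxISL !![ε ^ a, E; 0, ε ^ (-a)] !![ε ^ a, E + D; 0, ε ^ (-a)] := by
  rcases hD with hD | hD
  · have hQ := memIwahori_upper_unipotent (p := ε ^ (-a) * D)
      (le_val_eps_zpow_mul_iff.2 (by simpa using hD))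
    convert inIxISL_mul_mul MemIwahori.one hQ !![ε ^ a, E; 0, ε ^ (-a)] using 1
    rw [Matrix.one_mul, mul_fin_two]
    simp only [_root_.zpow_neg]
    apply fin_two_congr <;> field_simp <;> ring
  · have hP := memIwahori_upper_unipotent (p := ε ^ a * D)
      (le_val_eps_zpow_mul_iff.2 (by simpa using hD))
    convert inIxISL_mul_mul hP MemIwahori.one !![ε ^ a, E; 0, ε ^ (-a)] using 1
    rw [Matrix.mul_one, mul_fin_two]
    simp only [_root_.zpow_neg]
    apply fin_two_congr <;> field_simp <;> ring

theorem inIxISL_upper_antidiagonal {a V : ℤ} {E : LaurentSeries K} (hE : val E = V)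
    (ha : V < a) (ha' : V < -a) :
    InIxISL !![ε ^ a, E; 0, ε ^ (-a)] !![0, ε ^ V; -ε ^ (-V), 0] := by
  have hE0 : E ≠ 0 := by rintro rfl; simp at hE
  have hEinv := val_inv_of_val_eq hE
  have hP := (memIwahori_diagonal (val_eps_zpow_mul_inv hE)).mul
    (memIwahori_lower_unipotent (p := -(ε ^ (-a) * E⁻¹)) (by
      rw [val_neg]
      exact le_val_eps_zpow_mul_iff (n := 1).2 (by rw [hEinv]; exact_mod_cast (by omega))))
  have hQ := memIwahori_lower_unipotent (p := -(ε ^ a * E⁻¹)) (by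
    rw [val_neg]
    exact le_val_eps_zpow_mul_iff (n := 1).2 (by rw [hEinv]; exact_mod_cast (by omega)))
  convert inIxISL_mul_mul hP hQ !![ε ^ a, E; 0, ε ^ (-a)] using 1
  simp only [mul_fin_two, _root_.zpow_neg]
  apply fin_two_congr <;> field_simp <;> ring

theorem inIxISL_upper_of_val_eq (a : ℤ) {E E' : LaurentSeries K} (h : val E = val E') :
    InIxISL !![ε ^ a, E; 0, ε ^ (-a)] !![ε ^ a, E'; 0, ε ^ (-a)] := by
  by_cases hE : ((min a (-a) : ℤ) : WithTop ℤ) ≤ val E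
  · have hD : ((min a (-a) : ℤ) : WithTop ℤ) ≤ val (E' - E) := le_val_sub (h ▸ hE) hE
    rw [← add_sub_cancel E E']
    refine inIxISL_upper_add ?_
    rcases le_total a (-a) with ha | ha
    · exact .inl (by rwa [min_eq_left ha] at hD)
    · exact .inr (by rwa [min_eq_right ha] at hD)
  · push Not at hE
    obtain ⟨V, hV⟩ := WithTop.ne_top_iff_exists.1 (ne_top_of_lt hE)
    rw [← hV, WithTop.coe_lt_coe, lt_min_iff] at hE
    exact (inIxISL_upper_antidiagonal hV.symm hE.1 hE.2).trans
      (inIxISL_upper_antidiagonal (h ▸ hV.symm) hE.1 hE.2).symm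

theorem exists_eq_upper_mul_of_val_lt {g : Mat} (hg : g.det = 1)
    (h : val (g 1 1) < val (g 1 0)) :
    ∃ (r : ℤ) (y : LaurentSeries K) (j : Mat),
      MemIwahori j ∧ g = !![ε ^ r, y; 0, ε ^ (-r)] * j := by
  obtain ⟨α, β, γ, δ, rfl⟩ : ∃ α β γ δ, g = !![α, β; γ, δ] := ⟨_, _, _, _, g.eta_fin_two⟩
  rw [det_fin_two_of] at hg
  simp only [of_apply, cons_val_zero, cons_val_one] at h
  have hδ : δ ≠ 0 := by rintro rfl; simp at h
  obtain ⟨v, hv⟩ := WithTop.ne_top_iff_exists.1 (val_eq_top_iff.not.2 hδ)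
  refine ⟨-v, ε ^ v * β * δ⁻¹, !![ε ^ v * δ⁻¹, 0; ε ^ (-v) * γ, ε ^ (-v) * δ],
    ⟨?_, ?_⟩, ?_⟩
  · rw [iwahoriForm_of_fin_two_iff]
    refine ⟨val_eps_zpow_mul_inv hv.symm, by simp, le_val_eps_zpow_mul_iff.2 ?_,
      val_eps_zpow_neg_mul hv.symm⟩
    simpa [add_comm] using WithTop.coe_add_one_le_of_lt (hv ▸ h)
  · rw [det_fin_two_of]
    simp only [_root_.zpow_neg]
    field_simp
    simp
  · rw [mul_fin_two]
    simp only [_root_.zpow_neg, neg_neg]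
    apply fin_two_congr <;> field_simp
    case h₀₀ => linear_combination hg
    all_goals ring

theorem exists_eq_upper_mul_weyl_mul_of_val_le {g : Mat} (hg : g.det = 1)
    (h : val (g 1 0) ≤ val (g 1 1)) :
    ∃ (r : ℤ) (y : LaurentSeries K) (j : Mat),
      MemIwahori j ∧ g = !![ε ^ r, y; 0, ε ^ (-r)] * !![0, 1; -1, 0] * j := by
  obtain ⟨α, β, γ, δ, rfl⟩ : ∃ α β γ δ, g = !![α, β; γ, δ] := ⟨_, _, _, _, g.eta_fin_two⟩
  rw [det_fin_two_of] at hg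
  simp only [of_apply, cons_val_zero, cons_val_one] at h
  have hγ : γ ≠ 0 := by
    rintro rfl
    obtain rfl : δ = 0 := by simpa using h
    simp at hg
  obtain ⟨v, hv⟩ := WithTop.ne_top_iff_exists.1 (val_eq_top_iff.not.2 hγ)
  refine ⟨-v, ε ^ v * α * γ⁻¹, !![-(ε ^ (-v) * γ), -(ε ^ (-v) * δ); 0, -(ε ^ v * γ⁻¹)],
    ⟨?_, ?_⟩, ?_⟩
  · rw [iwahoriForm_of_fin_two_iff]
    simp only [val_neg]
    exact ⟨val_eps_zpow_neg_mul hv.symm, le_val_eps_zpow_mul_iff.2 (by simpa [hv]), by simp,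
      val_eps_zpow_mul_inv hv.symm⟩
  · rw [det_fin_two_of]
    simp only [_root_.zpow_neg]
    field_simp
    simp
  · rw [mul_fin_two, mul_fin_two]
    simp only [_root_.zpow_neg, neg_neg]
    apply fin_two_congr <;> field_simp
    case h₀₁ => linear_combination -((ε ^ v) ^ 2 * γ) * hg
    all_goals ring

section SigmaConjugation

variable {σ : LaurentSeries K →+* LaurentSeries K}

def sigmaConj (σ : LaurentSeries K →+* LaurentSeries K) (b g : Mat) : Mat :=
  g⁻¹ * b * g.map σ

theorem sigmaConj_mul (b g h : Mat) :
    sigmaConj σ b (g * h) = h⁻¹ * sigmaConj σ b g * h.map σ := by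
  simp only [sigmaConj, Matrix.mul_inv_rev, Matrix.map_mul, Matrix.mul_assoc]

theorem InIxISL.sigmaConj_mul_iwahori (hσ : ∀ x, val (σ x) = val x) {b g g' j j' : Mat}
    (hj : MemIwahori j) (hj' : MemIwahori j')
    (h : InIxISL (sigmaConj σ b g) (sigmaConj σ b g')) :
    InIxISL (sigmaConj σ b (g * j)) (sigmaConj σ b (g' * j')) := by
  rw [sigmaConj_mul, sigmaConj_mul]
  exact ((inIxISL_mul_mul hj.inv (hj.map hσ) _).symm.trans h).trans
    (inIxISL_mul_mul hj'.inv (hj'.map hσ) _)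

theorem sigmaConj_upper (hε : σ ε = ε) (m r : ℤ) (y : LaurentSeries K) :
    sigmaConj σ !![ε ^ m, 0; 0, ε ^ (-m)] !![ε ^ r, y; 0, ε ^ (-r)] =
      !![ε ^ m, ε ^ (m - r) * σ y - ε ^ (-m - r) * y; 0, ε ^ (-m)] := by
  have hinv : (!![ε ^ r, y; 0, ε ^ (-r)] : Mat)⁻¹ = !![ε ^ (-r), -y; 0, ε ^ r] := by
    refine inv_eq_left_inv ?_
    rw [mul_fin_two, one_fin_two]
    simp only [_root_.zpow_neg]
    apply fin_two_congr <;> field_simp <;> ring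
  rw [sigmaConj, hinv, map_fin_two_of, map_zpow₀, map_zpow₀, hε, map_zero]
  simp only [mul_fin_two, zpow_sub₀ eps_ne_zero, _root_.zpow_neg]
  apply fin_two_congr <;> field_simp <;> ring

theorem sigmaConj_upper_mul_weyl (hε : σ ε = ε) (m r : ℤ) (y : LaurentSeries K) :
    sigmaConj σ !![ε ^ m, 0; 0, ε ^ (-m)] (!![ε ^ r, y; 0, ε ^ (-r)] * !![0, 1; -1, 0]) =
      conjPi !![ε ^ m, -(ε⁻¹ * (ε ^ (m - r) * σ y - ε ^ (-m - r) * y)); 0, ε ^ (-m)] := by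
  have hinv : (!![0, 1; -1, 0] : Mat)⁻¹ = !![0, -1; 1, 0] := by
    refine inv_eq_left_inv ?_
    simp [one_fin_two]
  rw [sigmaConj_mul, sigmaConj_upper hε, hinv, map_fin_two_of, map_zero, map_one, map_neg,
    map_one, conjPi]
  simp only [mul_fin_two, of_apply, cons_val_zero, cons_val_one]
  apply fin_two_congr <;> field_simp <;> ring

theorem val_eps_zpow_mul_sub (hσ : ∀ x, val (σ x) = val x) {m : ℤ} (hm : m ≠ 0) (r : ℤ)
    (y : LaurentSeries K) :
    val (ε ^ (m - r) * σ y - ε ^ (-m - r) * y) =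
      min (↑(m - r) + val y) (↑(-m - r) + val y) := by
  by_cases hy : y = 0
  · simp [hy]
  obtain ⟨v, hv⟩ := WithTop.ne_top_iff_exists.1 (val_eq_top_iff.not.2 hy)
  rw [val_sub_of_ne] <;> rw [val_eps_zpow_mul, val_eps_zpow_mul, hσ]
  rw [← hv, ← WithTop.coe_add, ← WithTop.coe_add, Ne, WithTop.coe_eq_coe]
  omega

theorem torus_mul_upper (t : LaurentSeries K) (ht : t ≠ 0) (r : ℤ) (y : LaurentSeries K) :
    !![t, 0; 0, t⁻¹] * !![ε ^ r, y; 0, ε ^ (-r)] =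
      !![ε ^ r, t * t * y; 0, ε ^ (-r)] * !![t, 0; 0, t⁻¹] := by
  simp only [mul_fin_two]
  apply fin_two_congr <;> field_simp <;> ring

theorem torus_mul_weyl (t : LaurentSeries K) :
    !![t, 0; 0, t⁻¹] * !![0, 1; -1, 0] = !![0, 1; -1, 0] * !![t⁻¹, 0; 0, t⁻¹⁻¹] := by
  simp only [mul_fin_two, inv_inv]
  apply fin_two_congr <;> ring

theorem inIxISL_sigmaConj_torus_mul (hσ : ∀ x, val (σ x) = val x) (hε : σ ε = ε) {m : ℤ}
    (hm : m ≠ 0) {t : LaurentSeries K} (ht : val t = 0) {g : Mat} (hg : g.det = 1) :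
    InIxISL (sigmaConj σ !![ε ^ m, 0; 0, ε ^ (-m)] g)
      (sigmaConj σ !![ε ^ m, 0; 0, ε ^ (-m)] (!![t, 0; 0, t⁻¹] * g)) := by
  have ht0 : t ≠ 0 := by rintro rfl; simp at ht
  have hτ := memIwahori_diagonal ht
  have hval (y : LaurentSeries K) : val (t * t * y) = val y := by simp [val_mul, ht]
  rcases lt_or_ge (val (g 1 1)) (val (g 1 0)) with h | h
  · obtain ⟨r, y, j, hj, rfl⟩ := exists_eq_upper_mul_of_val_lt hg h
    rw [← Matrix.mul_assoc, torus_mul_upper t ht0, Matrix.mul_assoc]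
    refine InIxISL.sigmaConj_mul_iwahori hσ hj (hτ.mul hj) ?_
    rw [sigmaConj_upper hε, sigmaConj_upper hε]
    refine inIxISL_upper_of_val_eq m ?_
    rw [val_eps_zpow_mul_sub hσ hm, val_eps_zpow_mul_sub hσ hm, hval]
  · obtain ⟨r, y, j, hj, rfl⟩ := exists_eq_upper_mul_weyl_mul_of_val_le hg h
    have hτ' := memIwahori_diagonal (t := t⁻¹) (by rw [val_inv, ht, neg_zero])
    have hτg : !![t, 0; 0, t⁻¹] * (!![ε ^ r, y; 0, ε ^ (-r)] * !![0, 1; -1, 0] * j) =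
        !![ε ^ r, t * t * y; 0, ε ^ (-r)] * !![0, 1; -1, 0] *
          (!![t⁻¹, 0; 0, t⁻¹⁻¹] * j) := by
      simp only [← Matrix.mul_assoc, torus_mul_upper t ht0]
      simp only [Matrix.mul_assoc, torus_mul_weyl]
    rw [hτg]
    refine InIxISL.sigmaConj_mul_iwahori hσ hj (hτ'.mul hj) ?_
    rw [sigmaConj_upper_mul_weyl hε, sigmaConj_upper_mul_weyl hε]
    refine InIxISL.conjPi (inIxISL_upper_of_val_eq m ?_)
    simp only [val_neg, val_mul, val_eps_zpow_mul_sub hσ hm, hval]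

end SigmaConjugation

def LaurentSeries.mapRingHom (φ : K →+* K) : LaurentSeries K →+* LaurentSeries K where
  toFun x := x.map φ
  map_one' := HahnSeries.map_one φ.toMonoidWithZeroHom
  map_mul' _ _ := HahnSeries.map_mul φ.toNonUnitalRingHom
  map_zero' := HahnSeries.map_zero φ.toAddMonoidHom.toZeroHom
  map_add' _ _ := HahnSeries.map_add φ.toAddMonoidHom

theorem val_mapRingHom (φ : K →+* K) (x : LaurentSeries K) :
    val (LaurentSeries.mapRingHom φ x) = val x :=
  val_eq_of_support_eq (Set.ext fun _ ↦ map_ne_zero φ)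

theorem mapRingHom_eps (φ : K →+* K) : LaurentSeries.mapRingHom φ ε = ε :=
  (HahnSeries.map_single φ.toAddMonoidHom.toZeroHom).trans (congrArg _ φ.map_one)

end

theorem sl2_torus_action_preserves_adlv_general (F : Type*) [Field F] [Fintype F]
    (σ : LaurentSeries (AlgebraicClosure F) → LaurentSeries (AlgebraicClosure F))
    (hσ : IsFrobenius (AlgebraicClosure F) (Fintype.card F) σ)
    (m : ℤ) (hm : m ≠ 0)
    (t : LaurentSeries (AlgebraicClosure F)) (ht : val t = 0)
    (g x : Matrix (Fin 2) (Fin 2) (LaurentSeries (AlgebraicClosure F)))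
    (hg : g.det = 1) :
    InIxISL x (g⁻¹ * Matrix.diagonal ![eps (AlgebraicClosure F) ^ m,
        eps (AlgebraicClosure F) ^ (-m)] * g.map σ) ↔
    InIxISL x ((Matrix.diagonal ![t, t⁻¹] * g)⁻¹ *
        Matrix.diagonal ![eps (AlgebraicClosure F) ^ m, eps (AlgebraicClosure F) ^ (-m)] *
        (Matrix.diagonal ![t, t⁻¹] * g).map σ) := by
  set φ := (FiniteField.frobeniusAlgHom F (AlgebraicClosure F)).toRingHom
  obtain rfl : σ = LaurentSeries.mapRingHom φ := funext fun y ↦ HahnSeries.ext (funext (hσ y))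
  simp only [diagonal_fin_two, cons_val_zero, cons_val_one]
  exact (inIxISL_sigmaConj_torus_mul (val_mapRingHom φ) (mapRingHom_eps φ) hm ht hg).iff_of_right

/-- for `b = diag(ε^m, ε^{−m})` with `m ≠ 0`, `t ∈ o_L^×` and
`τ = diag(t, t⁻¹)`, one has `g⁻¹·b·σ(g) ∈ I·x·I` iff `(τg)⁻¹·b·σ(τg) ∈ I·x·I`; in
particular the affine Deligne–Lusztig set `X_x(b) ⊆ SL_2(L)/I` is preserved by left
multiplication by `τ`. -/
theorem sl2_torus_action_preserves_adlv (F : Type*) [Field F] [Fintype F]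
    (σ : LaurentSeries (AlgebraicClosure F) → LaurentSeries (AlgebraicClosure F))
    (hσ : IsFrobenius (AlgebraicClosure F) (Fintype.card F) σ)
    (m : ℤ) (hm : m ≠ 0)
    (t : LaurentSeries (AlgebraicClosure F)) (ht : val t = 0)
    (g x : Matrix (Fin 2) (Fin 2) (LaurentSeries (AlgebraicClosure F)))
    (hg : g.det = 1) (hx : EpsMonomial x) (hxdet : x.det = 1) :
    InIxISL x (g⁻¹ * Matrix.diagonal ![eps (AlgebraicClosure F) ^ m,
        eps (AlgebraicClosure F) ^ (-m)] * g.map σ) ↔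
    InIxISL x ((Matrix.diagonal ![t, t⁻¹] * g)⁻¹ *
        Matrix.diagonal ![eps (AlgebraicClosure F) ^ m, eps (AlgebraicClosure F) ^ (-m)] *
        (Matrix.diagonal ![t, t⁻¹] * g).map σ) :=
  sl2_torus_action_preserves_adlv_general F σ hσ m hm t ht g x hg
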